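/- For every odd positive integer x, E(η_x) ≥ x/(1+u), and for every even positive integer x, E(η_x) ≤ x/(1+u) + u(1−u)/(1+u). -/

import Mathlib

/-!
Write `p_y(x) = P(σ_y = x)`. Splitting on the last step gives
`p_{y+1}(x) = (1 - u) p_y(x - 1) + u p_y(x - 2)`. Since the partial sums increase strictly, the
events `{σ_y = x}` are disjoint, so the hitting probability `h(x) = ∑_y p_y(x)` and the moment
`m(x) = ∑_y y p_y(x)` satisfy second-order linear recurrences with characteristic roots `1` and
`-u`; solving them gives `E(η_x) = m(x) / h(x)` in closed form. The parity of `x` fixes the sign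
of `(-u)^(x+1) = ±t` with `t = u^(x+1)`, and each bound reduces to the nonnegativity of an
explicit polynomial in `u ∈ [0, 1]` and `t ≥ 0`.
-/

open MeasureTheory ProbabilityTheory Finset Function

/-- The law of a sum of `y` independent steps, each `1` with probability `1 - u` and `2` with
probability `u`. -/
noncomputable def walkProb (u : ℝ) : ℕ → ℕ → ℝ
  | 0, 0 => 1
  | 0, _ + 1 => 0
  | _ + 1, 0 => 0
  | y + 1, 1 => (1 - u) * walkProb u y 0
  | y + 1, x + 2 => (1 - u) * walkProb u y (x + 1) + u * walkProb u y x

namespace walkProb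

variable {u : ℝ}

lemma zero_left {x : ℕ} (hx : x ≠ 0) : walkProb u 0 x = 0 := by
  obtain ⟨x, rfl⟩ := Nat.exists_eq_succ_of_ne_zero hx
  rfl

lemma eq_zero_of_lt : ∀ {y x : ℕ}, x < y → walkProb u y x = 0
  | _ + 1, 0, _ => rfl
  | y + 1, 1, _ => by simp [walkProb, eq_zero_of_lt (show 0 < y by omega)]
  | y + 1, x + 2, h => by
    simp [walkProb, eq_zero_of_lt (show x + 1 < y by omega), eq_zero_of_lt (show x < y by omega)]

end walkProb

noncomputable def hitProb (u : ℝ) (x : ℕ) : ℝ := ∑ z ∈ range (x + 1), walkProb u z x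

noncomputable def hitMoment (u : ℝ) (x : ℕ) : ℝ := ∑ z ∈ range (x + 1), (z : ℝ) * walkProb u z x

section
variable {u : ℝ}

lemma sum_range_mul_walkProb_add_two (f : ℕ → ℝ) (x : ℕ) :
    ∑ z ∈ range (x + 3), f z * walkProb u z (x + 2) =
      (1 - u) * ∑ z ∈ range (x + 2), f (z + 1) * walkProb u z (x + 1) +
        u * ∑ z ∈ range (x + 1), f (z + 1) * walkProb u z x := by
  have hext : ∑ z ∈ range (x + 1), f (z + 1) * walkProb u z x =
      ∑ z ∈ range (x + 2), f (z + 1) * walkProb u z x := by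
    rw [sum_range_succ _ (x + 1), walkProb.eq_zero_of_lt (by omega), mul_zero, add_zero]
  rw [hext, sum_range_succ', walkProb.zero_left (by omega), mul_zero, add_zero, mul_sum, mul_sum,
    ← sum_add_distrib]
  simp only [walkProb]
  exact sum_congr rfl fun z _ => by ring

lemma hitProb_add_two (x : ℕ) :
    hitProb u (x + 2) = (1 - u) * hitProb u (x + 1) + u * hitProb u x := by
  simpa [hitProb] using sum_range_mul_walkProb_add_two (u := u) (fun _ => 1) x

lemma hitMoment_add_two (x : ℕ) :
    hitMoment u (x + 2) = (1 - u) * (hitMoment u (x + 1) + hitProb u (x + 1)) +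
      u * (hitMoment u x + hitProb u x) := by
  simpa only [hitMoment, hitProb, Nat.cast_add, Nat.cast_one, add_mul, one_mul, sum_add_distrib]
    using sum_range_mul_walkProb_add_two (u := u) (fun z => z) x

lemma hitProb_eq (hu : 1 + u ≠ 0) (x : ℕ) : hitProb u x = (1 - (-u) ^ (x + 1)) / (1 + u) := by
  induction x using Nat.twoStepInduction with
  | zero | one =>
    rw [eq_div_iff hu]
    simp only [hitProb, sum_range_succ, sum_range_zero, walkProb]
    ring
  | more x ih₀ ih₁ => rw [hitProb_add_two, ih₀, ih₁]; field_simp; ring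

lemma hitMoment_eq (hu : 1 + u ≠ 0) (x : ℕ) :
    hitMoment u x = ((x + 1) * (1 + u) * (1 + (-u) ^ (x + 2))
      - (1 + u ^ 2) * (1 - (-u) ^ (x + 1))) / (1 + u) ^ 3 := by
  induction x using Nat.twoStepInduction with
  | zero | one =>
    rw [eq_div_iff (pow_ne_zero 3 hu)]
    simp only [hitMoment, sum_range_succ, sum_range_zero, walkProb]
    push_cast
    ring
  | more x ih₀ ih₁ =>
    rw [hitMoment_add_two, ih₀, ih₁, hitProb_eq hu, hitProb_eq hu]; push_cast; field_simp; ring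

end

/-- The closed form of `E(η_x)`. -/
noncomputable def hittingTimeMean (u : ℝ) (x : ℕ) : ℝ :=
  (x + 1) / (1 + u) * (1 + (-u) ^ (x + 2)) / (1 - (-u) ^ (x + 1)) - (1 + u ^ 2) / (1 + u) ^ 2

section
variable {u : ℝ}

lemma hitMoment_div_hitProb (hu : |u| < 1) (x : ℕ) :
    hitMoment u x / hitProb u x = hittingTimeMean u x := by
  have hu' : 1 + u ≠ 0 := by linarith [neg_abs_le u]
  have hpow : (-u) ^ (x + 1) < 1 := (le_abs_self _).trans_lt <| by
    rw [abs_pow, abs_neg]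
    exact pow_lt_one₀ (abs_nonneg u) hu (by omega)
  rw [hitMoment_eq hu', hitProb_eq hu', hittingTimeMean]
  field_simp [(sub_pos.2 hpow).ne']

lemma tsum_mul_walkProb_div (x : ℕ) (c : ℝ) :
    ∑' y : ℕ, (y : ℝ) * (walkProb u y x / c) = hitMoment u x / c := by
  rw [tsum_eq_sum (s := range (x + 1)) fun y hy => by
    rw [walkProb.eq_zero_of_lt (by simpa using hy), zero_div, mul_zero], hitMoment, sum_div]
  exact sum_congr rfl fun y _ => (mul_div_assoc _ _ _).symm

lemma div_one_add_le_hittingTimeMean_of_odd (hu0 : 0 ≤ u) (hu1 : u < 1) {x : ℕ} (hx : Odd x) :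
    x / (1 + u) ≤ hittingTimeMean u x := by
  set t := u ^ (x + 1)
  have ht0 : 0 ≤ t := by positivity
  have ht1 : t < 1 := pow_lt_one₀ hu0 hu1 (by omega)
  have h1u : 0 ≤ 1 - u := by linarith
  have hpow₁ : (-u) ^ (x + 1) = t := hx.add_one.neg_pow u
  have hpow₂ : (-u) ^ (x + 2) = -(t * u) := by rw [pow_succ, hpow₁]; ring
  have hgap : hittingTimeMean u x - x / (1 + u) =
      (u * (1 - u) + t * (1 - u) * (x * (1 + u) + 1)) / ((1 + u) ^ 2 * (1 - t)) := by
    rw [hittingTimeMean, hpow₁, hpow₂]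
    field_simp [show 1 - t ≠ 0 by linarith]
    ring
  rw [← sub_nonneg, hgap]
  exact div_nonneg (by positivity) (by positivity)

lemma hittingTimeMean_le_of_even (hu0 : 0 ≤ u) (hu1 : u ≤ 1) {x : ℕ} (hx : Even x) :
    hittingTimeMean u x ≤ x / (1 + u) + u * (1 - u) / (1 + u) := by
  set t := u ^ (x + 1)
  have ht0 : 0 ≤ t := by positivity
  have hpow₁ : (-u) ^ (x + 1) = -t := hx.add_one.neg_pow u
  have hpow₂ : (-u) ^ (x + 2) = t * u := by rw [pow_succ, hpow₁]; ring
  have hgap : x / (1 + u) + u * (1 - u) / (1 + u) - hittingTimeMean u x =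
      (x * t * (1 - u ^ 2) + u ^ 2 * (1 - u) + t * (1 - u ^ 3)) / ((1 + u) ^ 2 * (1 + t)) := by
    rw [hittingTimeMean, hpow₁, hpow₂]
    field_simp [show 1 + t ≠ 0 by positivity]
    ring
  have hu2 : u ^ 2 ≤ 1 := pow_le_one₀ hu0 hu1
  have hu3 : u ^ 3 ≤ 1 := pow_le_one₀ hu0 hu1
  rw [← sub_nonneg, hgap]
  exact div_nonneg (by positivity) (by positivity)

end

section RandomWalk
variable {Ω : Type*} [MeasurableSpace Ω] {P : Measure Ω} [IsProbabilityMeasure P]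
  {u : ℝ} {ε : ℕ → Ω → ℕ}

lemma ae_forall_eq_one_or_eq_two (hmeas : ∀ k, Measurable (ε k))
    (h1 : ∀ k, P.real {ω | ε k ω = 1} = 1 - u) (h2 : ∀ k, P.real {ω | ε k ω = 2} = u) :
    ∀ᵐ ω ∂P, ∀ k, ε k ω = 1 ∨ ε k ω = 2 := by
  refine ae_all_iff.2 fun k => ?_
  have hdisj : Disjoint {ω | ε k ω = 1} {ω | ε k ω = 2} :=
    Set.disjoint_left.2 fun ω h h' => by simp_all
  have hmeas₁₂ : MeasurableSet {ω | ε k ω = 1 ∨ ε k ω = 2} :=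
    (hmeas k (measurableSet_singleton 1)).union (hmeas k (measurableSet_singleton 2))
  have hfull : P.real {ω | ε k ω = 1 ∨ ε k ω = 2} = 1 := by
    rw [Set.ofPred_or, measureReal_union hdisj (hmeas k (measurableSet_singleton 2)), h1, h2,
      sub_add_cancel]
  refine mem_ae_iff.2 ((measureReal_eq_zero_iff).1 ?_)
  rw [measureReal_compl hmeas₁₂, probReal_univ, hfull, sub_self]

lemma measureReal_sum_range_succ_eq (hmeas : ∀ k, Measurable (ε k)) (hindep : iIndepFun ε P)
    (h1 : ∀ k, P.real {ω | ε k ω = 1} = 1 - u) (h2 : ∀ k, P.real {ω | ε k ω = 2} = u)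
    (y x : ℕ) :
    P.real {ω | ∑ k ∈ range (y + 1), ε k ω = x} =
      (1 - u) * P.real {ω | ∑ k ∈ range y, ε k ω + 1 = x} +
        u * P.real {ω | ∑ k ∈ range y, ε k ω + 2 = x} := by
  have hind : IndepFun (fun ω => ∑ k ∈ range y, ε k ω) (ε y) P := by
    simpa only [sum_fn] using hindep.indepFun_sum_range_succ hmeas y
  have hmul : ∀ a b, P.real ({ω | ∑ k ∈ range y, ε k ω + a = x} ∩ {ω | ε y ω = b}) =
      P.real {ω | ∑ k ∈ range y, ε k ω + a = x} * P.real {ω | ε y ω = b} := fun a b => by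
    simp only [measureReal_def, ← ENNReal.toReal_mul]
    exact congrArg ENNReal.toReal <| hind.measure_inter_preimage_eq_mul {n | n + a = x} {b}
      .of_discrete (measurableSet_singleton b)
  have hsplit : {ω | ∑ k ∈ range (y + 1), ε k ω = x} =ᵐ[P]
      (({ω | ∑ k ∈ range y, ε k ω + 1 = x} ∩ {ω | ε y ω = 1}) ∪
        ({ω | ∑ k ∈ range y, ε k ω + 2 = x} ∩ {ω | ε y ω = 2}) : Set Ω) := by
    refine Filter.eventuallyEq_set.2 ?_
    filter_upwards [ae_forall_eq_one_or_eq_two hmeas h1 h2] with ω hω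
    rcases hω y with h | h <;> simp [sum_range_succ, h]
  have hdisj : Disjoint ({ω | ∑ k ∈ range y, ε k ω + 1 = x} ∩ {ω | ε y ω = 1})
      ({ω | ∑ k ∈ range y, ε k ω + 2 = x} ∩ {ω | ε y ω = 2}) :=
    Set.disjoint_left.2 fun ω h h' => by simp_all
  have hmeas₂ : MeasurableSet ({ω | ∑ k ∈ range y, ε k ω + 2 = x} ∩ {ω | ε y ω = 2}) :=
    ((Finset.measurable_sum (range y) fun k _ => hmeas k)
      (.of_discrete (s := {n | n + 2 = x}))).inter (hmeas y (measurableSet_singleton 2))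
  rw [measureReal_congr hsplit, measureReal_union hdisj hmeas₂, hmul, hmul, h1, h2]
  ring

lemma measureReal_sum_range_eq_walkProb (hmeas : ∀ k, Measurable (ε k)) (hindep : iIndepFun ε P)
    (h1 : ∀ k, P.real {ω | ε k ω = 1} = 1 - u) (h2 : ∀ k, P.real {ω | ε k ω = 2} = u) :
    ∀ y x, P.real {ω | ∑ k ∈ range y, ε k ω = x} = walkProb u y x
  | 0, 0 => by simp [walkProb]
  | 0, x + 1 => by simp [walkProb]
  | y + 1, x => by
    rw [measureReal_sum_range_succ_eq hmeas hindep h1 h2]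
    rcases x with _ | _ | x <;>
      simp only [walkProb, ← measureReal_sum_range_eq_walkProb hmeas hindep h1 h2 y,
        Nat.reduceEqDiff, Nat.add_eq_zero_iff, one_ne_zero, OfNat.ofNat_ne_zero, and_false,
        Set.ofPred_false, measureReal_empty, mul_zero, add_zero]

lemma ae_strictMono_sum_range (hmeas : ∀ k, Measurable (ε k))
    (h1 : ∀ k, P.real {ω | ε k ω = 1} = 1 - u) (h2 : ∀ k, P.real {ω | ε k ω = 2} = u) :
    ∀ᵐ ω ∂P, StrictMono fun y => ∑ k ∈ range y, ε k ω := by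
  filter_upwards [ae_forall_eq_one_or_eq_two hmeas h1 h2] with ω hω
  refine strictMono_nat_of_lt_succ fun y => ?_
  rw [sum_range_succ]
  rcases hω y with h | h <;> omega

lemma measureReal_exists_sum_range_eq (hmeas : ∀ k, Measurable (ε k)) (hindep : iIndepFun ε P)
    (h1 : ∀ k, P.real {ω | ε k ω = 1} = 1 - u) (h2 : ∀ k, P.real {ω | ε k ω = 2} = u)
    {x : ℕ} (hx : 1 ≤ x) :
    P.real {ω | ∃ z, 1 ≤ z ∧ ∑ k ∈ range z, ε k ω = x} = hitProb u x := by
  have hmono := ae_strictMono_sum_range hmeas h1 h2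
  have hunion : {ω | ∃ z, 1 ≤ z ∧ ∑ k ∈ range z, ε k ω = x} =ᵐ[P]
      ⋃ z ∈ range (x + 1), {ω | ∑ k ∈ range z, ε k ω = x} := by
    refine Filter.eventuallyEq_set.2 ?_
    filter_upwards [hmono] with ω hω
    simp only [Set.mem_ofPred_eq, Set.mem_iUnion, mem_range, exists_prop]
    constructor
    · rintro ⟨z, -, hz⟩
      exact ⟨z, Nat.lt_succ_of_le (hz ▸ hω.id_le z), hz⟩
    · rintro ⟨z, -, hz⟩
      refine ⟨z, Nat.one_le_iff_ne_zero.2 fun h0 => ?_, hz⟩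
      rw [h0, sum_range_zero] at hz
      omega
  have hdisj : Set.Pairwise (range (x + 1))
      (AEDisjoint P on fun z => {ω | ∑ k ∈ range z, ε k ω = x}) := by
    intro a _ b _ hab
    refine measure_eq_zero_iff_ae_notMem.2 ?_
    filter_upwards [hmono] with ω hω ⟨ha, hb⟩
    exact hab (hω.injective (ha.trans hb.symm))
  have hmeasz : ∀ z ∈ range (x + 1), NullMeasurableSet {ω | ∑ k ∈ range z, ε k ω = x} P :=
    fun z _ => ((Finset.measurable_sum _ fun k _ => hmeas k)
      (measurableSet_singleton x)).nullMeasurableSet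
  rw [measureReal_congr hunion, measureReal_biUnion_finset₀ hdisj hmeasz]
  exact sum_congr rfl fun z _ => measureReal_sum_range_eq_walkProb hmeas hindep h1 h2 z x

end RandomWalk

theorem conditional_hitting_time_expectation_parity_bounds
    (Ω : Type*) [MeasurableSpace Ω] (P : Measure Ω) [IsProbabilityMeasure P]
    (u : ℝ) (hu : u ∈ Set.Ioo (0 : ℝ) 1)
    (ε : ℕ → Ω → ℕ) (hmeas : ∀ k, Measurable (ε k))
    (hindep : iIndepFun ε P)
    (h1 : ∀ k, P {ω | ε k ω = 1} = ENNReal.ofReal (1 - u))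
    (h2 : ∀ k, P {ω | ε k ω = 2} = ENNReal.ofReal u)
    (σ : ℕ → Ω → ℕ) (hσ : ∀ y ω, σ y ω = ∑ k ∈ Finset.range y, ε k ω)
    (x : ℕ) (hx : 1 ≤ x) :
    (Odd x →
      (x : ℝ) / (1 + u) ≤ ∑' y : ℕ, (y : ℝ) *
        ((P {ω | σ y ω = x}).toReal / (P {ω | ∃ z, 1 ≤ z ∧ σ z ω = x}).toReal)) ∧
    (Even x →
      (∑' y : ℕ, (y : ℝ) *
        ((P {ω | σ y ω = x}).toReal / (P {ω | ∃ z, 1 ≤ z ∧ σ z ω = x}).toReal))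
        ≤ (x : ℝ) / (1 + u) + u * (1 - u) / (1 + u)) := by
  obtain ⟨hu0, hu1⟩ := hu
  obtain rfl : σ = fun y ω => ∑ k ∈ range y, ε k ω := funext₂ hσ
  have h1' : ∀ k, P.real {ω | ε k ω = 1} = 1 - u := fun k => by
    rw [measureReal_def, h1, ENNReal.toReal_ofReal (by linarith)]
  have h2' : ∀ k, P.real {ω | ε k ω = 2} = u := fun k => by
    rw [measureReal_def, h2, ENNReal.toReal_ofReal hu0.le]
  simp only [← measureReal_def, measureReal_sum_range_eq_walkProb hmeas hindep h1' h2',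
    measureReal_exists_sum_range_eq hmeas hindep h1' h2' hx, tsum_mul_walkProb_div,
    hitMoment_div_hitProb (abs_lt.2 ⟨by linarith, hu1⟩)]
  exact ⟨div_one_add_le_hittingTimeMean_of_odd hu0.le hu1, hittingTimeMean_le_of_even hu0.le hu1.le⟩
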